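/- arXiv:1112.3401 — 2 statements merged into one kernel-verified Lean document; each statement's English description precedes it below -/
import Mathlib

section
/- For γ ∈ (0, α), there exists a constant c = c(α,γ) > 0 such that for all t > 0 and all r ≥ 0, ∫_0^{t/2} min(1, r/s^{1/α})^γ ds ≤ c ∫_{t/2}^{t} min(1, r/s^{1/α})^γ ds. -/
/-!
Write `f s = min 1 (r / s ^ (1 / α)) ^ γ` and `β = γ / α < 1`. The function `f` is nonincreasing,
and since `min 1 (k * x) ≤ k * min 1 x` for `k ≥ 1`, it decays at most polynomially:
`f s ≤ (t / s) ^ β * f t` for `0 < s ≤ t`. Hence the integral over `(0, t/2)` is at most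
`f t * ∫₀^{t/2} (t / s) ^ β ds = 2 ^ β / (1 - β) * (t / 2) * f t`, while the integral over
`(t/2, t)` is at least `(t / 2) * f t`.
-/

open Real MeasureTheory Set

lemma div_rpow_eqOn_Ioo_zero {β t T : ℝ} (ht : 0 ≤ t) :
    EqOn (fun s => (t / s) ^ β) (fun s => t ^ β * s ^ (-β)) (Ioo 0 T) :=
  fun s hs => by dsimp only; rw [div_rpow ht hs.1.le, rpow_neg hs.1.le, div_eq_mul_inv]

lemma integrableOn_Ioo_zero_div_rpow {β : ℝ} (hβ : β < 1) {t T : ℝ} (ht : 0 ≤ t) (hT : 0 ≤ T) :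
    IntegrableOn (fun s => (t / s) ^ β) (Ioo 0 T) := by
  refine IntegrableOn.congr_fun ?_ (div_rpow_eqOn_Ioo_zero ht).symm measurableSet_Ioo
  refine Integrable.const_mul ?_ _
  exact (intervalIntegrable_iff_integrableOn_Ioo_of_le hT).mp
    (intervalIntegral.intervalIntegrable_rpow' (by linarith))

lemma integral_Ioo_zero_div_rpow {β : ℝ} (hβ : β < 1) {t T : ℝ} (ht : 0 ≤ t) (hT : 0 ≤ T) :
    ∫ s in Ioo 0 T, (t / s) ^ β = t ^ β * (T ^ (1 - β) / (1 - β)) := by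
  rw [setIntegral_congr_fun measurableSet_Ioo (div_rpow_eqOn_Ioo_zero ht), integral_const_mul,
    ← integral_Ioc_eq_integral_Ioo, ← intervalIntegral.integral_of_le hT,
    integral_rpow (Or.inl (by linarith)), zero_rpow (by linarith), sub_zero, neg_add_eq_sub]

lemma integral_Ioo_zero_half_div_rpow {β : ℝ} (hβ : β < 1) {t : ℝ} (ht : 0 < t) :
    ∫ s in Ioo 0 (t / 2), (t / s) ^ β = 2 ^ β / (1 - β) * (t / 2) := by
  have hsplit : t ^ β = 2 ^ β * (t / 2) ^ β := by
    rw [← mul_rpow zero_le_two (by positivity), mul_div_cancel₀ t two_ne_zero]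
  have hhalf : (t / 2) ^ β * (t / 2) ^ (1 - β) = t / 2 := by
    rw [← rpow_add (by positivity), add_sub_cancel, rpow_one]
  rw [integral_Ioo_zero_div_rpow hβ ht.le (by positivity), hsplit]
  linear_combination 2 ^ β / (1 - β) * hhalf

theorem setIntegral_Ioo_zero_half_le_of_rpow_bound (f : ℝ → ℝ) {β t : ℝ} (hβ : β < 1) (ht : 0 < t)
    (hf₀ : IntegrableOn f (Ioo 0 (t / 2))) (hf₁ : IntegrableOn f (Ioo (t / 2) t))
    (hbound : ∀ s ∈ Ioo 0 (t / 2), f s ≤ (t / s) ^ β * f t)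
    (hmono : ∀ s ∈ Ioo (t / 2) t, f t ≤ f s) :
    ∫ s in Ioo 0 (t / 2), f s ≤ 2 ^ β / (1 - β) * ∫ s in Ioo (t / 2) t, f s := by
  have hupper : ∫ s in Ioo 0 (t / 2), f s ≤ 2 ^ β / (1 - β) * (t / 2 * f t) := by
    calc ∫ s in Ioo 0 (t / 2), f s ≤ ∫ s in Ioo 0 (t / 2), (t / s) ^ β * f t :=
          setIntegral_mono_on hf₀ ((integrableOn_Ioo_zero_div_rpow hβ ht.le
            (by positivity)).mul_const _) measurableSet_Ioo hbound
      _ = 2 ^ β / (1 - β) * (t / 2 * f t) := by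
          rw [integral_mul_const, integral_Ioo_zero_half_div_rpow hβ ht]; ring
  have hlower : t / 2 * f t ≤ ∫ s in Ioo (t / 2) t, f s := by
    have := setIntegral_mono_on (integrableOn_const (by simp)) hf₁ measurableSet_Ioo hmono
    rwa [setIntegral_const, volume_real_Ioo_of_le (by linarith), smul_eq_mul,
      show t - t / 2 = t / 2 by ring] at this
  exact hupper.trans (mul_le_mul_of_nonneg_left hlower (div_nonneg (by positivity) (by linarith)))

section MinOneDivRpow

variable {r p : ℝ}

lemma min_one_div_rpow_nonneg (hr : 0 ≤ r) {s : ℝ} (hs : 0 ≤ s) : 0 ≤ min 1 (r / s ^ p) :=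
  le_min zero_le_one (div_nonneg hr (rpow_nonneg hs p))

lemma min_one_div_rpow_antitoneOn (hr : 0 ≤ r) (hp : 0 ≤ p) :
    AntitoneOn (fun s => min 1 (r / s ^ p)) (Ioi 0) := fun _ hs _ _ hst =>
  min_le_min le_rfl (div_le_div_of_nonneg_left hr (rpow_pos_of_pos hs p)
    (rpow_le_rpow (le_of_lt hs) hst hp))

lemma min_one_mul_le_mul_min_one {k : ℝ} (hk : 1 ≤ k) (x : ℝ) : min 1 (k * x) ≤ k * min 1 x := by
  rw [mul_min_of_nonneg _ _ (zero_le_one.trans hk), mul_one]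
  exact min_le_min hk le_rfl

lemma min_one_div_rpow_le_mul (hp : 0 ≤ p) {s t : ℝ} (hs : 0 < s) (hst : s ≤ t) :
    min 1 (r / s ^ p) ≤ (t / s) ^ p * min 1 (r / t ^ p) := by
  have hratio : r / s ^ p = (t / s) ^ p * (r / t ^ p) := by
    rw [div_rpow (hs.le.trans hst) hs.le]
    field_simp [(rpow_pos_of_pos (hs.trans_le hst) p).ne']
  rw [hratio]
  exact min_one_mul_le_mul_min_one (one_le_rpow ((one_le_div hs).mpr hst) hp) _

lemma min_one_div_rpow_rpow_le_mul (hr : 0 ≤ r) (hp : 0 ≤ p) {γ : ℝ} (hγ : 0 ≤ γ) {s t : ℝ}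
    (hs : 0 < s) (hst : s ≤ t) :
    min 1 (r / s ^ p) ^ γ ≤ (t / s) ^ (p * γ) * min 1 (r / t ^ p) ^ γ := by
  have hts : 0 ≤ t / s := div_nonneg (hs.le.trans hst) hs.le
  rw [rpow_mul hts, ← mul_rpow (rpow_nonneg hts p)
    (min_one_div_rpow_nonneg hr (hs.le.trans hst))]
  exact rpow_le_rpow (min_one_div_rpow_nonneg hr hs.le) (min_one_div_rpow_le_mul hp hs hst) hγ

lemma integrableOn_min_one_div_rpow_rpow (hr : 0 ≤ r) (hp : 0 ≤ p) {γ : ℝ} (hγ : 0 ≤ γ)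
    {a b : ℝ} (ha : 0 ≤ a) : IntegrableOn (fun s => min 1 (r / s ^ p) ^ γ) (Ioo a b) := by
  have hmeas : Measurable fun s : ℝ => min 1 (r / s ^ p) ^ γ :=
    (continuous_rpow_const hγ).measurable.comp
      (measurable_const.min (measurable_const.div (continuous_rpow_const hp).measurable))
  refine Measure.integrableOn_of_bounded (M := 1) measure_Ioo_lt_top.ne
    hmeas.aestronglyMeasurable ?_
  filter_upwards [ae_restrict_mem measurableSet_Ioo] with s hs
  have hmin := min_one_div_rpow_nonneg (p := p) hr (ha.trans hs.1.le)
  rw [norm_of_nonneg (rpow_nonneg hmin γ)]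
  exact rpow_le_one hmin (min_le_left _ _) hγ

end MinOneDivRpow

theorem stmt6_general (α γ : ℝ) (hα : 0 < α) (hγ : 0 < γ) (hγα : γ < α) :
    ∃ c : ℝ, 0 < c ∧ ∀ t r : ℝ, 0 < t → 0 ≤ r →
      (∫ s in Set.Ioo (0 : ℝ) (t / 2), (min 1 (r / s ^ (1 / α))) ^ γ)
        ≤ c * ∫ s in Set.Ioo (t / 2) t, (min 1 (r / s ^ (1 / α))) ^ γ := by
  have hp : 0 ≤ 1 / α := by positivity
  have hβ : 1 / α * γ < 1 := by rwa [one_div_mul_eq_div, div_lt_one hα]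
  refine ⟨2 ^ (1 / α * γ) / (1 - 1 / α * γ), div_pos (by positivity) (by linarith),
    fun t r ht hr => ?_⟩
  have hhalf : 0 < t / 2 := by positivity
  apply setIntegral_Ioo_zero_half_le_of_rpow_bound _ hβ ht
  · exact integrableOn_min_one_div_rpow_rpow hr hp hγ.le le_rfl
  · exact integrableOn_min_one_div_rpow_rpow hr hp hγ.le hhalf.le
  · exact fun s hs => min_one_div_rpow_rpow_le_mul hr hp hγ.le hs.1 (by linarith [hs.2])
  · exact fun s hs => rpow_le_rpow (min_one_div_rpow_nonneg hr ht.le)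
      (min_one_div_rpow_antitoneOn hr hp (hhalf.trans hs.1) ht hs.2.le) hγ.le

theorem stmt6 (α γ : ℝ) (hα : 0 < α) (hα2 : α < 2) (hγ : 0 < γ) (hγα : γ < α) :
    ∃ c : ℝ, 0 < c ∧ ∀ t r : ℝ, 0 < t → 0 ≤ r →
      (∫ s in Set.Ioo (0 : ℝ) (t / 2), (min 1 (r / s ^ (1 / α))) ^ γ)
        ≤ c * ∫ s in Set.Ioo (t / 2) t, (min 1 (r / s ^ (1 / α))) ^ γ :=
  stmt6_general α γ hα hγ hγα
end

section
/- Let d ≥ 1, α ∈ (0,2), γ ∈ [0, min(α,d)). There exists C = C(d,α,γ) > 0 such that for every t > 0 and y ∈ ℝ^d, ∫_0^t ∫_{ℝ^d} q(s,y,w) · (1 + t^{1/α}/|y-w|)^γ dw ds ≤ C·t, where q(s,y,w) = min(s^{-d/α}, s/|y-w|^{d+α}). -/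
/-!
Since `(1 + x)^γ ≤ 2^γ (1 + x^γ)`, it suffices to bound `∫ q(s,y,w) |y-w|^{-β} dw` for
`β ∈ {0, γ}`. The substitution `w = y + s^{1/α} u` turns this integral into
`s^{-β/α} ∫ q(1,0,u) |u|^{-β} du`, which is finite for `0 ≤ β < d`: near the origin `|u|^{-β}` is
integrable, and at infinity `q(1,0,u) ≤ |u|^{-d-α}`. The inner integral is therefore at most
`A + B t^{γ/α} s^{-γ/α}`, and as `γ < α` integrating over `s ∈ (0,t)` gives a multiple of `t`.
-/

open Real MeasureTheory Set Metric Module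

lemma rpow_neg_le_two_rpow_mul_one_add_rpow_neg {r p : ℝ} (hr : 1 ≤ r) (hp : 0 ≤ p) :
    r ^ (-p) ≤ 2 ^ p * (1 + r) ^ (-p) := by
  calc r ^ (-p) ≤ ((1 + r) / 2) ^ (-p) :=
        rpow_le_rpow_of_nonpos (by positivity) (by linarith) (neg_nonpos.2 hp)
    _ = 2 ^ p * (1 + r) ^ (-p) := by
        rw [div_rpow (by positivity) zero_le_two, rpow_neg zero_le_two, div_eq_mul_inv,
          inv_inv, mul_comm]

lemma one_add_rpow_le_two_rpow_mul {x γ : ℝ} (hx : 0 ≤ x) (hγ : 0 ≤ γ) :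
    (1 + x) ^ γ ≤ 2 ^ γ * (1 + x ^ γ) := by
  rcases le_total x 1 with hx1 | hx1
  · calc (1 + x) ^ γ ≤ 2 ^ γ := rpow_le_rpow (by positivity) (by linarith) hγ
      _ ≤ 2 ^ γ * (1 + x ^ γ) :=
        le_mul_of_one_le_right (by positivity) (le_add_of_nonneg_right (by positivity))
  · calc (1 + x) ^ γ ≤ (2 * x) ^ γ := rpow_le_rpow (by positivity) (by linarith) hγ
      _ ≤ 2 ^ γ * (1 + x ^ γ) := by
        rw [mul_rpow zero_le_two hx]
        gcongr
        exact le_add_of_nonneg_left zero_le_one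

lemma setIntegral_Ioo_le_of_le_add_rpow {f : ℝ → ℝ} {A B a t : ℝ} (ha : -1 < a) (ht : 0 < t)
    (hf₀ : ∀ s ∈ Ioo 0 t, 0 ≤ f s) (hf : ∀ s ∈ Ioo 0 t, f s ≤ A + B * s ^ a) :
    ∫ s in Ioo 0 t, f s ≤ A * t + B * (t ^ (a + 1) / (a + 1)) := by
  have hrpow : IntegrableOn (fun s : ℝ => s ^ a) (Ioo 0 t) :=
    (intervalIntegral.integrableOn_Ioo_rpow_iff ht).2 ha
  have hconst : IntegrableOn (fun _ : ℝ => A) (Ioo 0 t) := integrableOn_const (by simp)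
  calc ∫ s in Ioo 0 t, f s ≤ ∫ s in Ioo 0 t, (A + B * s ^ a) :=
        integral_mono_of_nonneg (ae_restrict_of_forall_mem measurableSet_Ioo hf₀)
          (hconst.add (hrpow.const_mul B)) (ae_restrict_of_forall_mem measurableSet_Ioo hf)
    _ = A * t + B * (t ^ (a + 1) / (a + 1)) := by
      rw [integral_add hconst (hrpow.const_mul B), integral_const_mul, setIntegral_const,
        ← integral_Ioc_eq_integral_Ioo, ← intervalIntegral.integral_of_le ht.le,
        integral_rpow (Or.inl ha), zero_rpow (by linarith), Real.volume_real_Ioo_of_le ht.le,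
        smul_eq_mul]
      ring

/-- The paper's `q(s, y, w)` in dimension `n`, as a function of `r = |y - w|`. -/
noncomputable def stableKernel (n α s r : ℝ) : ℝ :=
  min (s ^ (-n / α)) (s / r ^ (n + α))

section

variable {n α : ℝ}

lemma stableKernel_nonneg {s r : ℝ} (hs : 0 ≤ s) (hr : 0 ≤ r) : 0 ≤ stableKernel n α s r :=
  le_min (rpow_nonneg hs _) (div_nonneg hs (rpow_nonneg hr _))

lemma stableKernel_one_le_one (r : ℝ) : stableKernel n α 1 r ≤ 1 := by
  simpa only [stableKernel, one_rpow] using min_le_left _ _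

lemma stableKernel_one_le_rpow_neg {r : ℝ} (hr : 0 ≤ r) :
    stableKernel n α 1 r ≤ r ^ (-(n + α)) := by
  simpa only [stableKernel, rpow_neg hr, one_div] using min_le_right _ _

lemma stableKernel_rpow_mul_rpow_neg (hα : 0 < α) {c r : ℝ} (hc : 0 < c) (hr : 0 ≤ r) (β : ℝ) :
    stableKernel n α (c ^ α) r * r ^ (-β)
      = c ^ (-(n + β)) * (stableKernel n α 1 (c⁻¹ * r) * (c⁻¹ * r) ^ (-β)) := by
  have hscale : ∀ x : ℝ, (c⁻¹ * r) ^ x = c ^ (-x) * r ^ x := fun x => by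
    rw [mul_rpow (inv_nonneg.2 hc.le) hr, inv_rpow hc.le, rpow_neg hc.le]
  have hkernel : stableKernel n α (c ^ α) r = c ^ (-n) * stableKernel n α 1 (c⁻¹ * r) := by
    rw [stableKernel, stableKernel, one_rpow, ← rpow_mul hc.le, mul_min_of_nonneg _ _
      (rpow_nonneg hc.le _), mul_one, hscale, one_div, mul_inv, ← rpow_neg hc.le, neg_neg,
      ← mul_assoc, ← rpow_add hc, ← div_eq_mul_inv]
    congr 3
    · field_simp
    · ring
  rw [hkernel, hscale, neg_neg, neg_add, rpow_add hc, rpow_neg hc.le β]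
  field_simp

end

section HaarMeasure

variable {E : Type*} [NormedAddCommGroup E] [NormedSpace ℝ E] {α : ℝ}

lemma stableKernel_dist_mul_dist_rpow_neg (hα : 0 < α) {c : ℝ} (hc : 0 < c) (y : E) (β : ℝ) :
    (fun w : E => stableKernel (finrank ℝ E) α (c ^ α) (dist y w) * dist y w ^ (-β))
      = fun w => c ^ (-(finrank ℝ E + β)) *
          (stableKernel (finrank ℝ E) α 1 ‖c⁻¹ • (w - y)‖ * ‖c⁻¹ • (w - y)‖ ^ (-β)) := by
  ext w
  rw [dist_comm, dist_eq_norm, norm_smul, norm_inv, norm_of_nonneg hc.le]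
  exact stableKernel_rpow_mul_rpow_neg hα hc (norm_nonneg _) β

variable [FiniteDimensional ℝ E] [MeasurableSpace E] [BorelSpace E] (μ : Measure E)
  [μ.IsAddHaarMeasure]

lemma integrable_stableKernel_one_mul_norm_rpow_neg (hα : 0 < α) {β : ℝ} (hβ : 0 ≤ β)
    (hβE : β < finrank ℝ E) :
    Integrable (fun u : E => stableKernel (finrank ℝ E) α 1 ‖u‖ * ‖u‖ ^ (-β)) μ := by
  have hmeas : AEStronglyMeasurable
      (fun u : E => stableKernel (finrank ℝ E) α 1 ‖u‖ * ‖u‖ ^ (-β)) μ := by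
    unfold stableKernel; fun_prop
  have hE : 1 ≤ finrank ℝ E := by
    have : (0 : ℝ) < finrank ℝ E := hβ.trans_lt hβE
    exact_mod_cast this
  have hnonneg : ∀ u : E, 0 ≤ stableKernel (finrank ℝ E) α 1 ‖u‖ * ‖u‖ ^ (-β) := fun u =>
    mul_nonneg (stableKernel_nonneg zero_le_one (norm_nonneg u)) (rpow_nonneg (norm_nonneg u) _)
  rw [← integrableOn_univ, ← union_compl_self (ball (0 : E) 1)]
  refine .union
    (integrableOn_ball_of_norm_le_rpow (C := 1) hE hβE (ae_of_all _ fun u => ?_) hmeas)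
    ((((integrable_one_add_norm (μ := μ) (r := finrank ℝ E + α) (by linarith)).const_mul
      (2 ^ ((finrank ℝ E : ℝ) + α))).integrableOn).mono' hmeas.restrict ?_)
  · rw [norm_of_nonneg (hnonneg u), one_mul]
    exact mul_le_of_le_one_left (rpow_nonneg (norm_nonneg u) _) (stableKernel_one_le_one _)
  · filter_upwards [ae_restrict_mem measurableSet_ball.compl] with u hu
    rw [mem_compl_iff, mem_ball_zero_iff, not_lt] at hu
    rw [norm_of_nonneg (hnonneg u)]
    calc stableKernel (finrank ℝ E) α 1 ‖u‖ * ‖u‖ ^ (-β) ≤ ‖u‖ ^ (-(finrank ℝ E + α)) * 1 :=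
          mul_le_mul (stableKernel_one_le_rpow_neg (norm_nonneg u))
            (rpow_le_one_of_one_le_of_nonpos hu (neg_nonpos.2 hβ))
            (rpow_nonneg (norm_nonneg u) _) (rpow_nonneg (norm_nonneg u) _)
      _ ≤ 2 ^ ((finrank ℝ E : ℝ) + α) * (1 + ‖u‖) ^ (-(finrank ℝ E + α)) := by
          rw [mul_one]
          exact rpow_neg_le_two_rpow_mul_one_add_rpow_neg hu (by positivity)

lemma integrable_stableKernel_dist_mul_dist_rpow_neg (hα : 0 < α) {β : ℝ} (hβ : 0 ≤ β)
    (hβE : β < finrank ℝ E) {s : ℝ} (hs : 0 < s) (y : E) :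
    Integrable (fun w => stableKernel (finrank ℝ E) α s (dist y w) * dist y w ^ (-β)) μ := by
  obtain ⟨c, hc, rfl⟩ : ∃ c, 0 < c ∧ c ^ α = s :=
    ⟨s ^ α⁻¹, by positivity, rpow_inv_rpow hs.le hα.ne'⟩
  rw [stableKernel_dist_mul_dist_rpow_neg hα hc]
  exact (((integrable_stableKernel_one_mul_norm_rpow_neg μ hα hβ hβE).comp_smul
    (inv_ne_zero hc.ne')).comp_sub_right y).const_mul _

lemma integral_stableKernel_dist_mul_dist_rpow_neg (hα : 0 < α) {s : ℝ} (hs : 0 < s) (y : E)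
    (β : ℝ) :
    ∫ w, stableKernel (finrank ℝ E) α s (dist y w) * dist y w ^ (-β) ∂μ
      = s ^ (-β / α) * ∫ u, stableKernel (finrank ℝ E) α 1 ‖u‖ * ‖u‖ ^ (-β) ∂μ := by
  obtain ⟨c, hc, rfl⟩ : ∃ c, 0 < c ∧ c ^ α = s :=
    ⟨s ^ α⁻¹, by positivity, rpow_inv_rpow hs.le hα.ne'⟩
  rw [stableKernel_dist_mul_dist_rpow_neg hα hc, integral_const_mul,
    integral_sub_right_eq_self
      (fun x => stableKernel (finrank ℝ E) α 1 ‖c⁻¹ • x‖ * ‖c⁻¹ • x‖ ^ (-β)),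
    Measure.integral_comp_inv_smul_of_nonneg μ
      (fun u => stableKernel (finrank ℝ E) α 1 ‖u‖ * ‖u‖ ^ (-β)) hc.le, smul_eq_mul,
    ← mul_assoc, ← rpow_natCast, ← rpow_add hc, ← rpow_mul hc.le]
  congr 2
  field_simp
  ring

lemma exists_integral_stableKernel_mul_one_add_div_rpow_le (hα : 0 < α) {γ : ℝ} (hγ : 0 ≤ γ)
    (hγE : γ < finrank ℝ E) :
    ∃ A B : ℝ, 0 ≤ A ∧ 0 ≤ B ∧ ∀ s T : ℝ, 0 < s → 0 ≤ T → ∀ y : E,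
      ∫ w, stableKernel (finrank ℝ E) α s (dist y w) * (1 + T / dist y w) ^ γ ∂μ
        ≤ A + B * T ^ γ * s ^ (-γ / α) := by
  set I : ℝ → ℝ := fun β => ∫ u, stableKernel (finrank ℝ E) α 1 ‖u‖ * ‖u‖ ^ (-β) ∂μ
  have hI : ∀ β, 0 ≤ I β := fun β => integral_nonneg fun u =>
    mul_nonneg (stableKernel_nonneg zero_le_one (norm_nonneg u)) (rpow_nonneg (norm_nonneg u) _)
  refine ⟨2 ^ γ * I 0, 2 ^ γ * I γ, mul_nonneg (by positivity) (hI 0),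
    mul_nonneg (by positivity) (hI γ), fun s T hs hT y => ?_⟩
  set q : E → ℝ := fun w => stableKernel (finrank ℝ E) α s (dist y w)
  have hq : ∀ w, 0 ≤ q w := fun w => stableKernel_nonneg hs.le dist_nonneg
  have h0 := integrable_stableKernel_dist_mul_dist_rpow_neg μ hα le_rfl (hγ.trans_lt hγE) hs y
  have hγint := integrable_stableKernel_dist_mul_dist_rpow_neg μ hα hγ hγE hs y
  calc ∫ w, q w * (1 + T / dist y w) ^ γ ∂μ
      ≤ ∫ w, 2 ^ γ * (q w * dist y w ^ (-(0 : ℝ))) +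
          2 ^ γ * T ^ γ * (q w * dist y w ^ (-γ)) ∂μ := by
        refine integral_mono_of_nonneg
          (ae_of_all _ fun w => mul_nonneg (hq w) (rpow_nonneg (by positivity) _))
          ((h0.const_mul _).add (hγint.const_mul _)) (ae_of_all _ fun w => ?_)
        calc q w * (1 + T / dist y w) ^ γ ≤ q w * (2 ^ γ * (1 + (T / dist y w) ^ γ)) :=
              mul_le_mul_of_nonneg_left (one_add_rpow_le_two_rpow_mul (by positivity) hγ) (hq w)
          _ = _ := by
              dsimp only
              rw [div_rpow hT dist_nonneg, neg_zero, rpow_zero, rpow_neg dist_nonneg]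
              ring
    _ = 2 ^ γ * I 0 + 2 ^ γ * I γ * T ^ γ * s ^ (-γ / α) := by
        rw [integral_add (h0.const_mul _) (hγint.const_mul _), integral_const_mul,
          integral_const_mul, integral_stableKernel_dist_mul_dist_rpow_neg μ hα hs,
          integral_stableKernel_dist_mul_dist_rpow_neg μ hα hs, neg_zero, zero_div, rpow_zero]
        simp only [I, neg_zero]
        ring

end HaarMeasure

theorem stmt7_general (d : ℕ) (α γ : ℝ) (hα : 0 < α)
    (hγ : 0 ≤ γ) (hγα : γ < min α d) :
    ∃ C : ℝ, 0 < C ∧ ∀ t : ℝ, 0 < t → ∀ y : EuclideanSpace ℝ (Fin d),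
      (∫ s in Set.Ioo (0 : ℝ) t, ∫ w : EuclideanSpace ℝ (Fin d),
          min (s ^ (-(d : ℝ) / α)) (s / (dist y w) ^ ((d : ℝ) + α)) *
            (1 + t ^ (1 / α) / dist y w) ^ γ)
        ≤ C * t := by
  have hγα' : γ < α := hγα.trans_le (min_le_left _ _)
  have hγd : γ < finrank ℝ (EuclideanSpace ℝ (Fin d)) := by
    simpa using hγα.trans_le (min_le_right _ _)
  obtain ⟨A, B, hA, hB, hinner⟩ :=
    exists_integral_stableKernel_mul_one_add_div_rpow_le volume hα hγ hγd
  rw [finrank_euclideanSpace_fin] at hinner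
  have hδ : 0 < -γ / α + 1 := by rw [neg_div]; linarith [(div_lt_one hα).2 hγα']
  refine ⟨A + B / (-γ / α + 1) + 1, by positivity, fun t ht y => ?_⟩
  have htime : (t ^ (1 / α)) ^ γ * t ^ (-γ / α + 1) = t := by
    rw [← rpow_mul ht.le, ← rpow_add ht]
    conv_rhs => rw [← rpow_one t]
    congr 1
    field_simp
    ring
  calc _ ≤ A * t + B * (t ^ (1 / α)) ^ γ * (t ^ (-γ / α + 1) / (-γ / α + 1)) :=
        setIntegral_Ioo_le_of_le_add_rpow (by linarith) ht
          (fun s hs => integral_nonneg fun w =>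
            mul_nonneg (stableKernel_nonneg hs.1.le dist_nonneg) (rpow_nonneg (by positivity) _))
          (fun s hs => hinner s _ hs.1 (by positivity) y)
    _ = (A + B / (-γ / α + 1)) * t := by
        rw [mul_div_assoc', mul_assoc, htime]
        ring
    _ ≤ _ := mul_le_mul_of_nonneg_right (by linarith) ht.le

theorem stmt7 (d : ℕ) (hd : 1 ≤ d) (α γ : ℝ) (hα : 0 < α) (hα2 : α < 2)
    (hγ : 0 ≤ γ) (hγα : γ < min α d) :
    ∃ C : ℝ, 0 < C ∧ ∀ t : ℝ, 0 < t → ∀ y : EuclideanSpace ℝ (Fin d),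
      (∫ s in Set.Ioo (0 : ℝ) t, ∫ w : EuclideanSpace ℝ (Fin d),
          min (s ^ (-(d : ℝ) / α)) (s / (dist y w) ^ ((d : ℝ) + α)) *
            (1 + t ^ (1 / α) / dist y w) ^ γ)
        ≤ C * t :=
  stmt7_general d α γ hα hγ hγα
end
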